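/- Let λ ∈ (0,1/2) and define G(u) = u for u > 1, G(u) = u^{2-2λ} for 0 ≤ u ≤ 1. Then there exists a constant c = c(λ) > 0 such that for every U ≥ 0, U · ∫_0^{U/2} (1+z)^{-1+λ} z^{-2λ} dz ≥ c · G(U). -/
import Mathlib


open MeasureTheory Set Real

theorem stmt_2 (lam : ℝ) (hlam0 : 0 < lam) (hlam : lam < 1/2)
    (G : ℝ → ℝ) (hG : ∀ u : ℝ, G u = if 1 < u then u else u ^ (2 - 2 * lam)) :
    ∃ c : ℝ, 0 < c ∧ ∀ U : ℝ, 0 ≤ U →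
      c * G U ≤ U * ∫ z in Ioo (0:ℝ) (U / 2), (1 + z) ^ (-1 + lam) * z ^ (-(2 * lam)) := by
  set f : ℝ → ℝ := fun z => (1 + z) ^ (-1 + lam) * z ^ (-(2 * lam)) with hf
  have he1 : (-1 : ℝ) < -(2 * lam) := by linarith
  have hexp : (0:ℝ) < 1 - 2 * lam := by linarith
  -- integrability of z ^ (-(2*lam)) on Ioo 0 a
  have hg_int : ∀ a : ℝ, 0 ≤ a → IntegrableOn (fun z : ℝ => z ^ (-(2 * lam))) (Ioo 0 a) := by
    intro a ha
    have := (intervalIntegral.intervalIntegrable_rpow' (a := 0) (b := a) he1)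
    rw [intervalIntegrable_iff_integrableOn_Ioc_of_le ha] at this
    exact this.mono_set Ioo_subset_Ioc_self
  -- nonnegativity of f
  have hf_nonneg : ∀ z : ℝ, 0 < z → 0 ≤ f z := by
    intro z hz
    exact mul_nonneg (rpow_nonneg (by linarith) _) (rpow_nonneg hz.le _)
  have hne : (1 - 2 * lam) ≠ 0 := ne_of_gt hexp
  -- integrability of f on Ioo 0 a
  have hf_int : ∀ a : ℝ, 0 ≤ a → IntegrableOn f (Ioo 0 a) := by
    intro a ha
    refine MeasureTheory.Integrable.mono (hg_int a ha) ?_ ?_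
    · apply ContinuousOn.aestronglyMeasurable _ measurableSet_Ioo
      apply ContinuousOn.mul
      · exact (continuousOn_const.add continuousOn_id).rpow_const
          (fun x hx => Or.inl (by have := hx.1; dsimp; intro h; linarith [h]))
      · exact continuousOn_id.rpow_const (fun x hx => Or.inl (ne_of_gt hx.1))
    · filter_upwards [ae_restrict_mem measurableSet_Ioo] with z hz
      have hz0 : 0 < z := hz.1
      rw [Real.norm_of_nonneg (hf_nonneg z hz0), Real.norm_of_nonneg (rpow_nonneg hz0.le _)]
      have h1 : (1 + z) ^ (-1 + lam) ≤ 1 :=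
        rpow_le_one_of_one_le_of_nonpos (by linarith) (by linarith)
      calc f z ≤ 1 * z ^ (-(2 * lam)) :=
            mul_le_mul_of_nonneg_right h1 (rpow_nonneg hz0.le _)
        _ = z ^ (-(2 * lam)) := one_mul _
  -- value of ∫ z^(-(2 lam)) on Ioo 0 a
  have hg_val : ∀ a : ℝ, 0 ≤ a →
      ∫ z in Ioo (0:ℝ) a, z ^ (-(2 * lam)) = a ^ (1 - 2 * lam) / (1 - 2 * lam) := by
    intro a ha
    rw [← integral_Ioc_eq_integral_Ioo, ← intervalIntegral.integral_of_le ha,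
      integral_rpow (Or.inl he1)]
    rw [show -(2 * lam) + 1 = 1 - 2 * lam by ring, Real.zero_rpow (by linarith)]
    ring
  -- key lower bound for 0 < a ≤ 1
  have hkey : ∀ a : ℝ, 0 < a → a ≤ 1 →
      a ^ (1 - 2 * lam) / (2 * (1 - 2 * lam)) ≤ ∫ z in Ioo (0:ℝ) a, f z := by
    intro a ha0 ha1
    have hmono : ∫ z in Ioo (0:ℝ) a, (1/2 : ℝ) * z ^ (-(2 * lam)) ≤ ∫ z in Ioo (0:ℝ) a, f z := by
      apply setIntegral_mono_on
      · exact (hg_int a ha0.le).const_mul _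
      · exact hf_int a ha0.le
      · exact measurableSet_Ioo
      · intro z hz
        have hz0 : 0 < z := hz.1
        have hz1 : z ≤ 1 := le_of_lt (lt_of_lt_of_le hz.2 ha1)
        have h2 : (1/2 : ℝ) ≤ (1 + z) ^ (-1 + lam) := by
          have ha : (2:ℝ) ^ (-1 + lam) ≤ (1 + z) ^ (-1 + lam) :=
            rpow_le_rpow_of_nonpos (by linarith) (by linarith) (by linarith)
          have hb : (2:ℝ) ^ (-1 : ℝ) ≤ (2:ℝ) ^ (-1 + lam) :=
            rpow_le_rpow_of_exponent_le (by norm_num) (by linarith)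
          rw [rpow_neg_one] at hb
          norm_num at hb
          linarith
        exact mul_le_mul_of_nonneg_right h2 (rpow_nonneg hz0.le _)
    rw [MeasureTheory.integral_const_mul, hg_val a ha0.le] at hmono
    calc a ^ (1 - 2 * lam) / (2 * (1 - 2 * lam))
        = 1/2 * (a ^ (1 - 2 * lam) / (1 - 2 * lam)) := by field_simp
      _ ≤ _ := hmono
  refine ⟨1 / (4 * (1 - 2 * lam)), by positivity, ?_⟩
  intro U hU
  rcases eq_or_lt_of_le hU with hU0 | hU0
  · -- U = 0
    rw [← hU0]
    have : G 0 = 0 := by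
      rw [hG]; norm_num
      exact Real.zero_rpow (by linarith)
    rw [this]
    simp
  rcases le_or_gt U 2 with hU2 | hU2
  · -- 0 < U ≤ 2
    have ha0 : 0 < U / 2 := by linarith
    have ha1 : U / 2 ≤ 1 := by linarith
    have hI := hkey (U/2) ha0 ha1
    have hpow : U ^ (1 - 2 * lam) / 2 ≤ (U / 2) ^ (1 - 2 * lam) := by
      rw [div_rpow hU0.le (by norm_num)]
      have : (2:ℝ) ^ (1 - 2 * lam) ≤ 2 ^ (1:ℝ) :=
        rpow_le_rpow_of_exponent_le (by norm_num) (by linarith)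
      rw [rpow_one] at this
      have h2 : (0:ℝ) < 2 ^ (1 - 2 * lam) := rpow_pos_of_pos (by norm_num) _
      have hnum : 0 ≤ U ^ (1 - 2 * lam) := rpow_nonneg hU0.le _
      gcongr
    have hbound : U ^ (2 - 2 * lam) / (4 * (1 - 2 * lam)) ≤
        U * ∫ z in Ioo (0:ℝ) (U / 2), f z := by
      have h1 : U * (U ^ (1 - 2*lam) / 2 / (2 * (1 - 2*lam))) ≤
          U * ((U/2) ^ (1 - 2*lam) / (2 * (1 - 2*lam))) := by
        apply mul_le_mul_of_nonneg_left _ hU0.le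
        exact div_le_div_of_nonneg_right hpow (by positivity)
      have h2 : U * ((U/2) ^ (1 - 2*lam) / (2 * (1 - 2*lam))) ≤
          U * ∫ z in Ioo (0:ℝ) (U / 2), f z :=
        mul_le_mul_of_nonneg_left hI hU0.le
      have h3 : U ^ (2 - 2 * lam) / (4 * (1 - 2 * lam)) =
          U * (U ^ (1 - 2*lam) / 2 / (2 * (1 - 2*lam))) := by
        rw [show (2 : ℝ) - 2 * lam = 1 + (1 - 2 * lam) by ring,
          rpow_add hU0, rpow_one]
        field_simp
        ring
      rw [h3]
      exact h1.trans h2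
    rcases le_or_gt U 1 with hU1 | hU1
    · rw [hG, if_neg (by linarith)]
      calc 1 / (4 * (1 - 2 * lam)) * U ^ (2 - 2 * lam)
          = U ^ (2 - 2 * lam) / (4 * (1 - 2 * lam)) := by ring
        _ ≤ _ := hbound
    · rw [hG, if_pos hU1]
      have hup : U ≤ U ^ (2 - 2 * lam) := by
        nth_rewrite 1 [← rpow_one U]
        exact rpow_le_rpow_of_exponent_le hU1.le (by linarith)
      calc 1 / (4 * (1 - 2 * lam)) * U
          ≤ 1 / (4 * (1 - 2 * lam)) * U ^ (2 - 2 * lam) := by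
            apply mul_le_mul_of_nonneg_left hup (by positivity)
        _ = U ^ (2 - 2 * lam) / (4 * (1 - 2 * lam)) := by ring
        _ ≤ _ := hbound
  · -- U > 2
    rw [hG, if_pos (by linarith)]
    have ha0 : (0:ℝ) ≤ U / 2 := by linarith
    have hsub : ∫ z in Ioo (0:ℝ) 1, f z ≤ ∫ z in Ioo (0:ℝ) (U/2), f z := by
      apply setIntegral_mono_set (hf_int (U/2) ha0)
      · filter_upwards [ae_restrict_mem measurableSet_Ioo] with z hz using hf_nonneg z hz.1
      · filter_upwards with z hz using ⟨hz.1, lt_of_lt_of_le hz.2 (by linarith)⟩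
    have hI1 := hkey 1 one_pos le_rfl
    rw [Real.one_rpow] at hI1
    have hIlb : 1 / (2 * (1 - 2 * lam)) ≤ ∫ z in Ioo (0:ℝ) (U/2), f z :=
      le_trans hI1 hsub
    calc 1 / (4 * (1 - 2 * lam)) * U
        ≤ 1 / (2 * (1 - 2 * lam)) * U := by
          apply mul_le_mul_of_nonneg_right _ (by linarith)
          rw [div_le_div_iff₀ (by positivity) (by positivity)]
          nlinarith
      _ = U * (1 / (2 * (1 - 2 * lam))) := by ring
      _ ≤ U * ∫ z in Ioo (0:ℝ) (U/2), f z :=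
          mul_le_mul_of_nonneg_left hIlb (by linarith)
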